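/- arXiv:1903.07841 — 2 statements merged into one kernel-verified Lean document; each statement's English description precedes it below -/
import Mathlib

section
/- Let n ≥ 4 be a composite integer. The zero divisor graph Γ(Z_n) is a complete graph if and only if n = p² for some prime p. -/
open scoped BigOperators

/-- Vertex set of the zero divisor graph of `ZMod n`: the nonzero zero divisors. -/
abbrev ZdVert (n : ℕ) : Type :=
  {x : ZMod n // x ≠ 0 ∧ ∃ y : ZMod n, y ≠ 0 ∧ x * y = 0}

/-- The zero divisor graph `Γ(ZMod n)`: vertices are the nonzero zero divisors, and two
distinct vertices are adjacent iff their product is zero. -/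
def zdGraph (n : ℕ) : SimpleGraph (ZdVert n) where
  Adj a b := a ≠ b ∧ (a : ZMod n) * (b : ZMod n) = 0
  symm := ⟨by
    rintro a b ⟨hne, h⟩
    exact ⟨hne.symm, by rwa [mul_comm]⟩⟩
  loopless := ⟨fun a h => h.1 rfl⟩

instance (n : ℕ) : DecidableRel (zdGraph n).Adj :=
  fun a b => inferInstanceAs (Decidable (a ≠ b ∧ (a : ZMod n) * (b : ZMod n) = 0))

instance (n : ℕ) (s : Set (ZdVert n)) [DecidablePred (· ∈ s)] :
    DecidableRel ((zdGraph n).induce s).Adj :=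
  fun a b => inferInstanceAs (Decidable ((zdGraph n).Adj a b))

/-- The set `A_d = {x ∈ ZMod n : gcd(x, n) = d}`, viewed inside the vertex set of the
zero divisor graph. -/
def fiberSet (n : ℕ) (d : ℕ) : Set (ZdVert n) :=
  {v | Nat.gcd (v : ZMod n).val n = d}

instance (n d : ℕ) : DecidablePred (· ∈ fiberSet n d) :=
  fun v => inferInstanceAs (Decidable (Nat.gcd (v : ZMod n).val n = d))

/-! In `ZMod (p ^ 2)` every zero divisor is a multiple of `p`, so any two of them multiply to a
multiple of `p ^ 2`. Conversely, write `n = p * m` with `p` the least prime factor, so `p ≤ m`.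
If `Γ(ZMod n)` is complete, the vertex `p` is adjacent to `-p` unless `p = -p`, so `p * p = 0` or
`p + p = 0` in `ZMod n`, i.e. `m ∣ p` or `m ∣ 2`; either way `m = p`. -/

theorem Nat.exists_prime_le_mul_eq_of_not_prime {n : ℕ} (h1 : 1 < n) (hn : ¬ n.Prime) :
    ∃ p m : ℕ, p.Prime ∧ p ≤ m ∧ n = p * m := by
  obtain ⟨m, hnm⟩ := n.minFac_dvd
  have hsq : n.minFac * n.minFac ≤ n.minFac * m := by
    rw [← hnm, ← sq]; exact Nat.minFac_sq_le_self (by omega) hn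
  exact ⟨n.minFac, m, Nat.minFac_prime h1.ne', Nat.le_of_mul_le_mul_left hsq
    (Nat.minFac_pos n), hnm⟩

namespace zdGraph

theorem not_isUnit {n : ℕ} (v : ZdVert n) : ¬ IsUnit (v : ZMod n) := by
  obtain ⟨x, -, y, hy, hxy⟩ := v
  exact fun hx => hy (hx.mul_right_eq_zero.mp hxy)

theorem mul_self_eq_zero_or_add_self_eq_zero {n : ℕ} (h : zdGraph n = ⊤) {x y : ZMod n}
    (hx : x ≠ 0) (hy : y ≠ 0) (hxy : x * y = 0) : x * x = 0 ∨ x + x = 0 := by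
  refine or_iff_not_imp_right.mpr fun hxx => ?_
  let v : ZdVert n := ⟨x, hx, y, hy, hxy⟩
  let w : ZdVert n := ⟨-x, neg_ne_zero.mpr hx, y, hy, by rw [neg_mul, hxy, neg_zero]⟩
  have hvw : v ≠ w := fun e => hxx (by rw [eq_neg_iff_add_eq_zero.mp (congrArg Subtype.val e)])
  have hadj : (zdGraph n).Adj v w := h ▸ hvw
  simpa [v, w] using hadj.2

theorem cofactor_eq_of_eq_top {p m : ℕ} (hp : p.Prime) (hpm : p ≤ m)
    (h : zdGraph (p * m) = ⊤) : m = p := by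
  have hm : 1 < m := hp.one_lt.trans_le hpm
  have hp0 : (p : ZMod (p * m)) ≠ 0 := by
    rw [ne_eq, ZMod.natCast_eq_zero_iff, ← mul_one p, mul_assoc, one_mul,
      Nat.mul_dvd_mul_iff_left hp.pos, Nat.dvd_one]
    omega
  have hm0 : (m : ZMod (p * m)) ≠ 0 := by
    rw [ne_eq, ZMod.natCast_eq_zero_iff, ← one_mul m, ← mul_assoc, mul_one,
      Nat.mul_dvd_mul_iff_right (by omega), Nat.dvd_one]
    exact hp.one_lt.ne'
  have hpm0 : (p : ZMod (p * m)) * m = 0 := by rw [← Nat.cast_mul, ZMod.natCast_self]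
  rcases mul_self_eq_zero_or_add_self_eq_zero h hp0 hm0 hpm0 with hsq | htwo
  · rw [← Nat.cast_mul, ZMod.natCast_eq_zero_iff, Nat.mul_dvd_mul_iff_left hp.pos] at hsq
    exact (hp.eq_one_or_self_of_dvd m hsq).resolve_left hm.ne'
  · rw [← two_mul, ← Nat.cast_ofNat, ← Nat.cast_mul, ZMod.natCast_eq_zero_iff, mul_comm 2,
      Nat.mul_dvd_mul_iff_left hp.pos] at htwo
    have := Nat.le_of_dvd two_pos htwo
    have := hp.two_le
    omega

theorem prime_dvd_val {p : ℕ} (hp : p.Prime) [NeZero (p ^ 2)] (v : ZdVert (p ^ 2)) :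
    p ∣ (v : ZMod (p ^ 2)).val := by
  by_contra hv
  refine not_isUnit v ?_
  rw [← ZMod.natCast_zmod_val (v : ZMod (p ^ 2)), ZMod.isUnit_iff_coprime]
  exact ((hp.coprime_iff_not_dvd.mpr hv).pow_left 2).symm

theorem mul_eq_zero_of_sq_prime {p : ℕ} (hp : p.Prime) (v w : ZdVert (p ^ 2)) :
    (v : ZMod (p ^ 2)) * (w : ZMod (p ^ 2)) = 0 := by
  have : NeZero (p ^ 2) := ⟨pow_ne_zero 2 hp.ne_zero⟩
  obtain ⟨a, ha⟩ := prime_dvd_val hp v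
  obtain ⟨b, hb⟩ := prime_dvd_val hp w
  rw [← ZMod.natCast_zmod_val (v : ZMod (p ^ 2)), ← ZMod.natCast_zmod_val (w : ZMod (p ^ 2)),
    ha, hb, ← Nat.cast_mul, ZMod.natCast_eq_zero_iff]
  exact ⟨a * b, by ring⟩

end zdGraph

/-- For composite `n ≥ 4`, the zero divisor graph `Γ(ZMod n)` is complete iff `n = p²`
for some prime `p`. -/
theorem zdGraph_complete_iff (n : ℕ) (hn : 4 ≤ n) (hcomp : ¬ n.Prime) :
    zdGraph n = ⊤ ↔ ∃ p : ℕ, p.Prime ∧ n = p ^ 2 := by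
  constructor
  · intro h
    obtain ⟨p, m, hp, hpm, rfl⟩ := Nat.exists_prime_le_mul_eq_of_not_prime (by omega) hcomp
    exact ⟨p, hp, by rw [zdGraph.cofactor_eq_of_eq_top hp hpm h, sq]⟩
  · rintro ⟨p, hp, rfl⟩
    exact SimpleGraph.eq_top_iff_forall_ne_adj.mpr fun v w hvw =>
      ⟨hvw, zdGraph.mul_eq_zero_of_sq_prime hp v w⟩
end

section
/- Let n ≥ 4 be a composite integer. The complement graph of the zero divisor graph Γ(Z_n) is disconnected if and only if n is a product of two distinct primes, or n is a prime power with n ≠ 4. -/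
open scoped BigOperators

/-!
Every vertex of `Γ(ℤ/n)` is a multiple of some prime factor of `n`. If `n = pq`, every multiple
of `p` is adjacent in `Γ` to every multiple of `q`, so the complement has no edge between these two
classes. If `n = p ^ k` with `k ≥ 2`, the vertex `p ^ (k - 1)` annihilates every vertex, so it is
isolated in the complement, which has a second vertex unless `n = 4`. Otherwise `n` has distinct
prime factors `p`, `q` with `pq` a proper divisor of `n`: then `p` and `q` are adjacent in the
complement, and every other vertex `x` is adjacent there to `p` or to `q`, because `xp = xq = 0`
with `p`, `q` coprime forces `x = 0`.
-/

namespace SimpleGraph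

variable {V : Type*} {G : SimpleGraph V}

theorem not_connected_of_adj_mem {s : Set V} (hs : ∀ ⦃a b⦄, G.Adj a b → a ∈ s → b ∈ s)
    {u v : V} (hu : u ∈ s) (hv : v ∉ s) : ¬G.Connected := by
  have walk_mem : ∀ {a b : V}, G.Walk a b → a ∈ s → b ∈ s := by
    intro a b w
    induction w with
    | nil => exact id
    | cons hadj _ ih => exact fun ha => ih (hs hadj ha)
  exact fun hG => hv (walk_mem (hG u v).some hu)

theorem connected_of_adj_of_forall_adj_or_adj {u v : V} (huv : G.Adj u v)
    (h : ∀ x, x ≠ u → x ≠ v → G.Adj x u ∨ G.Adj x v) : G.Connected := by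
  have reach_u : ∀ x, G.Reachable x u := by
    intro x
    by_cases hxu : x = u
    · exact hxu ▸ .rfl
    by_cases hxv : x = v
    · exact hxv ▸ huv.symm.reachable
    rcases h x hxu hxv with hx | hx
    · exact hx.reachable
    · exact hx.reachable.trans huv.symm.reachable
  exact (connected_iff_exists_forall_reachable G).2 ⟨u, fun x => (reach_u x).symm⟩

end SimpleGraph

open SimpleGraph

namespace ZMod

theorem natCast_ne_zero_of_pos_of_lt {n m : ℕ} (h0 : 0 < m) (hlt : m < n) :
    (m : ZMod n) ≠ 0 := by
  rw [Ne, natCast_eq_zero_iff]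
  exact Nat.not_dvd_of_pos_of_lt h0 hlt

theorem dvd_of_natCast_dvd_natCast {m n a : ℕ} (hmn : m ∣ n)
    (h : (m : ZMod n) ∣ (a : ZMod n)) : m ∣ a := by
  have := map_dvd (castHom hmn (ZMod m)) h
  rwa [map_natCast, map_natCast, natCast_self, zero_dvd_iff, natCast_eq_zero_iff] at this

end ZMod

namespace ZdVert

def ofDvd {n m : ℕ} (hm : m ∣ n) (h1 : 1 < m) (hlt : m < n) : ZdVert n :=
  ⟨m, ZMod.natCast_ne_zero_of_pos_of_lt (by omega) hlt, (n / m : ℕ),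
    ZMod.natCast_ne_zero_of_pos_of_lt (Nat.div_pos hlt.le (by omega))
      (Nat.div_lt_self (by omega) h1),
    by rw [← Nat.cast_mul, Nat.mul_div_cancel' hm, ZMod.natCast_self]⟩

@[simp]
theorem coe_ofDvd {n m : ℕ} (hm : m ∣ n) (h1 : 1 < m) (hlt : m < n) :
    (ofDvd hm h1 hlt : ZMod n) = m :=
  rfl

theorem not_coprime_val {n : ℕ} [NeZero n] (v : ZdVert n) : ¬(v : ZMod n).val.Coprime n := by
  intro hcop
  obtain ⟨-, y, hy, hvy⟩ := v.2
  have hunit : IsUnit (v : ZMod n) := by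
    simpa only [ZMod.natCast_zmod_val] using (ZMod.isUnit_iff_coprime _ n).2 hcop
  exact hy (hunit.mul_right_eq_zero.1 hvy)

theorem exists_prime_dvd {n : ℕ} [NeZero n] (v : ZdVert n) :
    ∃ p, p.Prime ∧ p ∣ n ∧ (p : ZMod n) ∣ v := by
  obtain ⟨p, hp, hpv, hpn⟩ := Nat.Prime.not_coprime_iff_dvd.1 v.not_coprime_val
  refine ⟨p, hp, hpn, ?_⟩
  simpa only [ZMod.natCast_zmod_val] using Nat.cast_dvd_cast (α := ZMod n) hpv

end ZdVert

theorem zdGraph_compl_adj {n : ℕ} {a b : ZdVert n} :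
    (zdGraph n)ᶜ.Adj a b ↔ a ≠ b ∧ (a : ZMod n) * b ≠ 0 := by
  simp only [compl_adj, zdGraph, not_and, Ne]
  tauto

theorem zdGraph_compl_connected_of_isCoprime {n : ℕ} {u v : ZdVert n} (huv : u ≠ v)
    (hmul : (u : ZMod n) * v ≠ 0) (hcop : IsCoprime (u : ZMod n) v) :
    (zdGraph n)ᶜ.Connected := by
  refine connected_of_adj_of_forall_adj_or_adj (zdGraph_compl_adj.2 ⟨huv, hmul⟩)
    fun x hxu hxv => ?_
  rw [zdGraph_compl_adj, zdGraph_compl_adj]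
  by_contra! h
  obtain ⟨a, b, hab⟩ := hcop
  exact x.2.1 (by linear_combination a * h.1 hxu + b * h.2 hxv - (x : ZMod n) * hab)

theorem zdGraph_compl_connected_of_coprime_mul_lt {n p q : ℕ} (hpq : p.Coprime q) (hp : 1 < p)
    (hq : 1 < q) (hdvd : p * q ∣ n) (hlt : p * q < n) : (zdGraph n)ᶜ.Connected := by
  have hpn : p < n := (lt_mul_of_one_lt_right (by omega) hq).trans hlt
  have hqn : q < n := (lt_mul_of_one_lt_left (by omega) hp).trans hlt
  refine zdGraph_compl_connected_of_isCoprime (u := .ofDvd (dvd_of_mul_right_dvd hdvd) hp hpn)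
    (v := .ofDvd (dvd_of_mul_left_dvd hdvd) hq hqn) ?_ ?_ ?_
  · intro h
    have hval := congrArg Subtype.val h
    simp only [ZdVert.coe_ofDvd, ZMod.natCast_eq_natCast_iff', Nat.mod_eq_of_lt hpn,
      Nat.mod_eq_of_lt hqn] at hval
    subst hval
    exact absurd ((Nat.coprime_self p).1 hpq) (by omega)
  · rw [ZdVert.coe_ofDvd, ZdVert.coe_ofDvd, ← Nat.cast_mul]
    exact ZMod.natCast_ne_zero_of_pos_of_lt (by positivity) hlt
  · simpa using (Nat.isCoprime_iff_coprime.2 hpq).map (Int.castRingHom (ZMod n))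

theorem zdGraph_four_compl_connected : (zdGraph 4)ᶜ.Connected := by
  have : Nonempty (ZdVert 4) := ⟨⟨2, by decide⟩⟩
  have : Subsingleton (ZdVert 4) := ⟨fun x y => Subtype.ext <| by
    have only_two : ∀ z : ZMod 4, (z ≠ 0 ∧ ∃ w : ZMod 4, w ≠ 0 ∧ z * w = 0) → z = 2 :=
      by decide
    rw [only_two _ x.2, only_two _ y.2]⟩
  exact .of_subsingleton

theorem zdGraph_prime_compl_not_connected {p : ℕ} (hp : p.Prime) :
    ¬(zdGraph p)ᶜ.Connected := by
  have : Fact p.Prime := ⟨hp⟩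
  have : IsEmpty (ZdVert p) := ⟨fun ⟨_, hx, _, hy, hxy⟩ => mul_ne_zero hx hy hxy⟩
  exact fun h => h.nonempty.elim isEmptyElim

theorem zdGraph_prime_mul_compl_not_connected {p q : ℕ} (hp : p.Prime) (hq : q.Prime)
    (hpq : p ≠ q) : ¬(zdGraph (p * q))ᶜ.Connected := by
  have : NeZero (p * q) := ⟨mul_ne_zero hp.ne_zero hq.ne_zero⟩
  have hpn : p < p * q := lt_mul_of_one_lt_right hp.pos hq.one_lt
  have hqn : q < p * q := lt_mul_of_one_lt_left hq.pos hp.one_lt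
  refine not_connected_of_adj_mem (s := {x | (p : ZMod (p * q)) ∣ x}) ?_
    (u := .ofDvd (dvd_mul_right p q) hp.one_lt hpn) (v := .ofDvd (dvd_mul_left q p) hq.one_lt hqn)
    dvd_rfl ?_
  · intro a b hab ha
    by_contra hb
    obtain ⟨r, hr, hrn, hrb⟩ := b.exists_prime_dvd
    obtain rfl : r = q := by
      rcases hr.dvd_mul.1 hrn with h | h
      · exact absurd ((Nat.prime_dvd_prime_iff_eq hr hp).1 h ▸ hrb) hb
      · exact (Nat.prime_dvd_prime_iff_eq hr hq).1 h
    refine (zdGraph_compl_adj.1 hab).2 ?_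
    have hprod := mul_dvd_mul ha hrb
    rwa [← Nat.cast_mul, ZMod.natCast_self, zero_dvd_iff] at hprod
  · exact fun h => hpq ((Nat.prime_dvd_prime_iff_eq hp hq).1
      (ZMod.dvd_of_natCast_dvd_natCast (dvd_mul_right p q) h))

theorem zdGraph_prime_pow_compl_not_connected {p k : ℕ} (hp : p.Prime) (hk : 2 ≤ k)
    (h4 : p ^ k ≠ 4) : ¬(zdGraph (p ^ k))ᶜ.Connected := by
  have : NeZero (p ^ k) := ⟨pow_ne_zero k hp.ne_zero⟩
  have hpk : p ^ (k - 1) * p = p ^ k := pow_sub_one_mul (by omega) p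
  have hp1 : 1 < p ^ (k - 1) := Nat.one_lt_pow (by omega) hp.one_lt
  have hlt : p ^ (k - 1) < p ^ k := Nat.pow_lt_pow_right hp.one_lt (by omega)
  have hpn : p < p ^ k := (Nat.le_self_pow (by omega) p).trans_lt hlt
  -- `p ^ k = 4` is the only case with `2 * p = 0`, and there `p` is the only vertex of `Γ`.
  have h2p : 2 * p < p ^ k := by
    have hne : p ^ (k - 1) ≠ 2 := fun h2 => h4 <| by
      have : p = 2 := (Nat.prime_dvd_prime_iff_eq hp Nat.prime_two).1
        (h2 ▸ dvd_pow_self p (by omega))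
      rw [← hpk, h2, this]
    rw [← hpk]
    exact Nat.mul_lt_mul_of_pos_right (by omega) hp.pos
  let x₀ : ZdVert (p ^ k) := .ofDvd (pow_dvd_pow p (Nat.sub_le k 1)) hp1 hlt
  have hx₀ : (x₀ : ZMod (p ^ k)) * p = 0 := by
    rw [ZdVert.coe_ofDvd, ← Nat.cast_mul, hpk, ZMod.natCast_self]
  let w₁ : ZdVert (p ^ k) := .ofDvd (dvd_pow_self p (by omega)) hp.one_lt hpn
  let w₂ : ZdVert (p ^ k) := ⟨(2 * p : ℕ),
    ZMod.natCast_ne_zero_of_pos_of_lt (Nat.mul_pos two_pos hp.pos) h2p,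
    x₀, x₀.2.1, by rw [mul_comm, Nat.cast_mul, mul_left_comm, hx₀, mul_zero]⟩
  have : Nontrivial (ZdVert (p ^ k)) := by
    refine nontrivial_of_ne w₁ w₂ fun h => ?_
    have hval := congrArg Subtype.val h
    simp only [w₁, w₂, ZdVert.coe_ofDvd, ZMod.natCast_eq_natCast_iff', Nat.mod_eq_of_lt hpn,
      Nat.mod_eq_of_lt h2p] at hval
    exact hp.ne_zero (by omega)
  have huniv : (zdGraph (p ^ k)).IsUniversal x₀ := by
    refine fun w hw => ⟨hw, ?_⟩
    obtain ⟨r, hr, hrn, hrw⟩ := w.exists_prime_dvd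
    rw [(Nat.prime_dvd_prime_iff_eq hr hp).1 (hr.dvd_of_dvd_pow hrn)] at hrw
    obtain ⟨c, hc⟩ := hrw
    rw [hc, ← mul_assoc, hx₀, zero_mul]
  exact fun h => h.preconnected.not_isIsolated x₀ (isIsolated_compl_iff_isUniversal.2 huniv)

theorem Nat.exists_primes_ne_dvd_of_not_isPrimePow {n : ℕ} (hn : n ≠ 1) (h : ¬IsPrimePow n) :
    ∃ p q, p.Prime ∧ q.Prime ∧ p ≠ q ∧ p ∣ n ∧ q ∣ n := by
  obtain ⟨p, hp, hpn⟩ := Nat.exists_prime_and_dvd hn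
  rw [isPrimePow_iff_unique_prime_dvd] at h
  obtain ⟨q, ⟨hq, hqn⟩, hqp⟩ : ∃ q, (q.Prime ∧ q ∣ n) ∧ q ≠ p := by
    by_contra! h'
    exact h ⟨p, ⟨hp, hpn⟩, h'⟩
  exact ⟨p, q, hp, hq, hqp.symm, hpn, hqn⟩

theorem zdGraph_compl_disconnected_iff_general (n : ℕ) (hn : 4 ≤ n) :
    ¬ ((zdGraph n)ᶜ.Connected) ↔
      ((∃ p q : ℕ, p.Prime ∧ q.Prime ∧ p ≠ q ∧ n = p * q) ∨
       ((∃ p k : ℕ, p.Prime ∧ 0 < k ∧ n = p ^ k) ∧ n ≠ 4)) := by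
  refine ⟨fun hdis => ?_, ?_⟩
  · by_cases h4 : n = 4
    · exact absurd (h4 ▸ zdGraph_four_compl_connected) hdis
    by_cases hpow : ∃ p k : ℕ, p.Prime ∧ 0 < k ∧ n = p ^ k
    · exact Or.inr ⟨hpow, h4⟩
    have hpow' : ¬IsPrimePow n := by simpa [isPrimePow_nat_iff, eq_comm] using hpow
    obtain ⟨p, q, hp, hq, hpq, hpn, hqn⟩ :=
      Nat.exists_primes_ne_dvd_of_not_isPrimePow (by omega) hpow'
    have hcop : p.Coprime q := (Nat.coprime_primes hp hq).2 hpq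
    have hdvd : p * q ∣ n := hcop.mul_dvd_of_dvd_of_dvd hpn hqn
    refine Or.inl ⟨p, q, hp, hq, hpq, by_contra fun hne => hdis ?_⟩
    exact zdGraph_compl_connected_of_coprime_mul_lt hcop hp.one_lt hq.one_lt hdvd
      ((Nat.le_of_dvd (by omega) hdvd).lt_of_ne (Ne.symm hne))
  · rintro (⟨p, q, hp, hq, hpq, rfl⟩ | ⟨⟨p, k, hp, hk, rfl⟩, h4⟩)
    · exact zdGraph_prime_mul_compl_not_connected hp hq hpq
    · obtain rfl | hk2 : k = 1 ∨ 2 ≤ k := by omega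
      · rw [pow_one]
        exact zdGraph_prime_compl_not_connected hp
      · exact zdGraph_prime_pow_compl_not_connected hp hk2 h4

/-- For composite `n ≥ 4`, the complement of the zero divisor graph `Γ(ZMod n)` is
disconnected iff `n` is a product of two distinct primes or a prime power with `n ≠ 4`. -/
theorem zdGraph_compl_disconnected_iff (n : ℕ) (hn : 4 ≤ n) (hcomp : ¬ n.Prime) :
    ¬ ((zdGraph n)ᶜ.Connected) ↔
      ((∃ p q : ℕ, p.Prime ∧ q.Prime ∧ p ≠ q ∧ n = p * q) ∨
       ((∃ p k : ℕ, p.Prime ∧ 0 < k ∧ n = p ^ k) ∧ n ≠ 4)) :=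
  zdGraph_compl_disconnected_iff_general n hn
end
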